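/- arXiv:1708.02692 — 3 statements merged into one kernel-verified Lean document; each statement's English description precedes it below -/
import Mathlib

section
/- Suppose the vertex n has degree exactly k in the k-tree G(𝒯) (n is a leaf of G(𝒯)), and for 1 ≤ i ≤ n let T_kG_{n−1}^i be the subgraph of T_kG_n induced by the permutations p with p(n) = i. Then every vertex u of T_kG_{n−1}^i has exactly k neighbors outside T_kG_{n−1}^i, and these k outside neighbors lie in k pairwise distinct copies T_kG_{n−1}^j with j ≠ i. -/
/-!
A neighbour `u * t` of `u` leaves the copy of `u` exactly when the transposition `t` moves the
last point `m`, i.e. when `t = (m j)` with `j` a neighbour of `m` in `G(𝒯)`. Hence the outside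
neighbours of `u` are the permutations `u * (m j)`, one for each neighbour `j` of the leaf `m`,
and `u * (m j)` lies in the copy indexed by `u j`, which determines `j`.
-/

/-- The transposition generating graph `G(𝒯)` of a set `T` of transpositions of `Sym(n)`:
vertices `{1,…,n}` (modeled as `Fin n`), with an edge `i j` iff the transposition
`(i j)` belongs to `T`. -/
def transGraph {n : ℕ} (T : Set (Equiv.Perm (Fin n))) : SimpleGraph (Fin n) :=
  SimpleGraph.fromRel (fun i j => Equiv.swap i j ∈ T)

/-- The Cayley graph `Cay(Sym(n), T)`: vertices are permutations, and `g, h` are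
adjacent iff `h = g * t` for some `t ∈ T`. -/
def cayley {n : ℕ} (T : Set (Equiv.Perm (Fin n))) : SimpleGraph (Equiv.Perm (Fin n)) :=
  SimpleGraph.fromRel (fun g h => ∃ t ∈ T, h = g * t)

/-- `G` is a `k`-tree: there is a construction ordering of the vertices in which the
first `k+1` vertices are mutually adjacent, and each later vertex is joined to exactly
`k` mutually adjacent earlier vertices. -/
def IsKTree (k : ℕ) {V : Type*} [Fintype V] (G : SimpleGraph V) : Prop :=
  k + 1 ≤ Fintype.card V ∧
  ∃ e : Fin (Fintype.card V) ≃ V,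
    (∀ i j : Fin (Fintype.card V), j < i → (i : ℕ) ≤ k → G.Adj (e i) (e j)) ∧
    ∀ i : Fin (Fintype.card V), k + 1 ≤ (i : ℕ) →
      {j : Fin (Fintype.card V) | j < i ∧ G.Adj (e i) (e j)}.ncard = k ∧
      {j : Fin (Fintype.card V) | j < i ∧ G.Adj (e i) (e j)}.Pairwise
        (fun j₁ j₂ => G.Adj (e j₁) (e j₂))

/-- `F` is an `R_k`-vertex-cut of `G`: `G - F` is disconnected and every vertex of
`G - F` has at least `k` neighbors in `G - F`. -/
def IsRkCut {V : Type*} (G : SimpleGraph V) (k : ℕ) (F : Set V) : Prop :=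
  ¬ (G.induce (Fᶜ : Set V)).Connected ∧
  ∀ v : V, v ∉ F → k ≤ {u : V | u ∉ F ∧ G.Adj v u}.ncard

/-- The `R_k`-vertex-connectivity `κ^k(G)`: the minimum cardinality of an
`R_k`-vertex-cut of `G`. -/
noncomputable def rkConn {V : Type*} (G : SimpleGraph V) (k : ℕ) : ℕ :=
  sInf {m : ℕ | ∃ F : Set V, IsRkCut G k F ∧ F.ncard = m}

open Equiv

theorem Equiv.Perm.IsSwap.eq_swap_apply_of_apply_ne {α : Type*} [DecidableEq α] {σ : Perm α}
    (hσ : σ.IsSwap) {m : α} (hm : σ m ≠ m) : σ = swap m (σ m) := by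
  obtain ⟨a, b, -, rfl⟩ := hσ
  rcases (swap_apply_ne_self_iff.mp hm).2 with rfl | rfl
  · simp
  · simp [swap_comm]

section CayleyOfSwaps

variable {n : ℕ} {T : Set (Perm (Fin n))}

theorem transGraph_adj {i j : Fin n} : (transGraph T).Adj i j ↔ i ≠ j ∧ swap i j ∈ T := by
  rw [transGraph, SimpleGraph.fromRel_adj, swap_comm j i, or_self]

theorem cayley_adj_iff_of_isSwap (hT : ∀ t ∈ T, t.IsSwap) {u v : Perm (Fin n)} :
    (cayley T).Adj u v ↔ u ≠ v ∧ ∃ t ∈ T, v = u * t := by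
  rw [cayley, SimpleGraph.fromRel_adj]
  refine and_congr_right fun _ => ⟨?_, Or.inl⟩
  rintro (h | ⟨t, ht, rfl⟩)
  · exact h
  · obtain ⟨a, b, -, rfl⟩ := hT t ht
    exact ⟨_, ht, by rw [mul_assoc, swap_mul_self, mul_one]⟩

theorem cayley_outsideNeighbors_eq_image (hT : ∀ t ∈ T, t.IsSwap) (u : Perm (Fin n))
    (m : Fin n) :
    {v | (cayley T).Adj u v ∧ v m ≠ u m} =
      (fun j => u * swap m j) '' (transGraph T).neighborSet m := by
  ext v
  simp only [Set.mem_ofPred_eq, Set.mem_image, SimpleGraph.mem_neighborSet, transGraph_adj,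
    cayley_adj_iff_of_isSwap hT]
  constructor
  · rintro ⟨⟨-, t, ht, rfl⟩, hvm⟩
    have htm : t m ≠ m := fun h => hvm (by rw [Perm.mul_apply, h])
    have hts := (hT t ht).eq_swap_apply_of_apply_ne htm
    exact ⟨t m, ⟨htm.symm, hts ▸ ht⟩, by rw [← hts]⟩
  · rintro ⟨j, ⟨hmj, hj⟩, rfl⟩
    refine ⟨⟨fun h => hmj (by simpa using congrArg (· m) h), _, hj, rfl⟩, ?_⟩
    simpa using u.injective.ne hmj.symm

end CayleyOfSwaps

/-- If the vertex `n` (the last vertex) is a leaf of the `k`-tree `G(𝒯)`, i.e. it has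
degree exactly `k`, then every vertex `u` of the copy `T_kG_{n-1}^i` (permutations with
last value `i = u(n)`) has exactly `k` neighbors outside its copy, and these outside
neighbors lie in `k` pairwise distinct copies. -/
theorem stmt2 (n k : ℕ) (hn : 1 ≤ n)
    (T : Set (Equiv.Perm (Fin n))) (hT : ∀ t ∈ T, Equiv.Perm.IsSwap t)
    (hleaf : ((transGraph T).neighborSet ⟨n - 1, by omega⟩).ncard = k)
    (u : Equiv.Perm (Fin n)) :
    {v : Equiv.Perm (Fin n) | (cayley T).Adj u v ∧
        v ⟨n - 1, by omega⟩ ≠ u ⟨n - 1, by omega⟩}.ncard = k ∧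
    Set.InjOn (fun v : Equiv.Perm (Fin n) => v ⟨n - 1, by omega⟩)
      {v : Equiv.Perm (Fin n) | (cayley T).Adj u v ∧
        v ⟨n - 1, by omega⟩ ≠ u ⟨n - 1, by omega⟩} := by
  set m : Fin n := ⟨n - 1, by omega⟩
  rw [cayley_outsideNeighbors_eq_image hT u m]
  have hcopy : Set.InjOn ((fun v : Perm (Fin n) => v m) ∘ fun j => u * swap m j)
      ((transGraph T).neighborSet m) := by
    simp [Function.comp_def, u.injective.injOn]
  exact ⟨hcopy.of_comp.ncard_image.trans hleaf, hcopy.image_of_comp⟩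
end

section
/- For n ≥ k+1 ≥ 3, any two distinct vertices of the Cayley graph T_kG_n generated by a k-tree on n vertices have at most 3 common neighbors; in particular, T_kG_n contains no subgraph isomorphic to the complete bipartite graph K_{2,4}. -/
/-!
A common neighbour `u * t = v * s` of `u ≠ v` gives a factorisation `σ = s * t` of
`σ := v⁻¹ * u ≠ 1` into transpositions. Any transposition `t = swap x y` with `σ * t` again a
transposition is "consecutive" for `σ`, i.e. `t = swap z (σ z)` for some `z` moved by `σ`; and
`σ` moves only the at most four points of one fixed factorisation `swap a b * swap c d`. When
these are four distinct points, `σ` swaps `a` and `b`, so `z = a` and `z = b` give the same `t`.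
Hence there are at most three such `t`, i.e. at most three common neighbours, and no `K_{2,4}`.
-/

open Equiv Function

namespace Equiv.Perm

variable {α : Type*} [DecidableEq α]

theorem IsSwap.eq_swap_of_apply_ne_self {s : Perm α} (hs : s.IsSwap) {x y : α} (hxy : x ≠ y)
    (hx : s x ≠ x) (hy : s y ≠ y) : s = swap x y := by
  obtain ⟨p, q, -, rfl⟩ := hs
  rcases (swap_apply_ne_self_iff.1 hx).2 with rfl | rfl <;>
    rcases (swap_apply_ne_self_iff.1 hy).2 with rfl | rfl <;>
    first | exact absurd rfl hxy | rfl | exact swap_comm _ _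

/-- If `σ * swap x y` is a swap `s` and `σ` moves neither `x` to `y` nor `y` to `x`, then `s`
moves both `x` and `y`, so `s = swap x y` and `σ = 1`. -/
theorem apply_eq_or_apply_eq_of_isSwap_mul_swap {σ : Perm α} (hσ : σ ≠ 1) {x y : α}
    (hxy : x ≠ y) (h : (σ * swap x y).IsSwap) : σ x = y ∨ σ y = x := by
  by_contra! hne
  have hs := h.eq_swap_of_apply_ne_self hxy (by simpa using hne.2) (by simpa using hne.1)
  exact hσ (by simpa using congrArg (· * swap x y) hs)

theorem ncard_setOf_isSwap_and_isSwap_mul_le_three {σ : Perm α} (hσ : σ ≠ 1) :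
    {t : Perm α | t.IsSwap ∧ (σ * t).IsSwap}.ncard ≤ 3 := by
  classical
  obtain hS | ⟨_, ⟨c, d, -, rfl⟩, a, b, -, hσab⟩ :=
    {t : Perm α | t.IsSwap ∧ (σ * t).IsSwap}.eq_empty_or_nonempty
  · simp [hS]
  have hσ_eq : σ = swap a b * swap c d := by rw [← hσab, mul_assoc, swap_mul_self, mul_one]
  have hsupp : ∀ z, σ z ≠ z → z ∈ ({a, b, c, d} : Finset α) := by
    intro z hz
    contrapose! hz
    simp only [Finset.mem_insert, Finset.mem_singleton, not_or] at hz
    rw [hσ_eq, mul_apply, swap_apply_of_ne_of_ne hz.2.2.1 hz.2.2.2,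
      swap_apply_of_ne_of_ne hz.1 hz.2.1]
  set f : α → Perm α := fun x => swap x (σ x)
  have hsub : {t | t.IsSwap ∧ (σ * t).IsSwap} ⊆ ↑(({a, b, c, d} : Finset α).image f) := by
    rintro _ ⟨⟨x, y, hxy, rfl⟩, ht⟩
    rcases apply_eq_or_apply_eq_of_isSwap_mul_swap hσ hxy ht with h | h
    · exact Finset.mem_image.2 ⟨x, hsupp x (h ▸ hxy.symm), congrArg (swap x) h⟩
    · exact Finset.mem_image.2
        ⟨y, hsupp y (h ▸ hxy), (congrArg (swap y) h).trans (swap_comm y x)⟩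
  refine (Set.ncard_le_ncard hsub (Finset.finite_toSet _)).trans ?_
  rw [Set.ncard_coe_finset]
  by_cases hmeet : a = c ∨ a = d ∨ b = c ∨ b = d
  · refine Finset.card_image_le.trans ?_
    rcases hmeet with rfl | rfl | rfl | rfl <;> simp [Finset.card_le_three]
  · simp only [not_or] at hmeet
    have hfab : f a = f b := by
      simp [f, hσ_eq, swap_apply_of_ne_of_ne, hmeet, swap_comm]
    calc (({a, b, c, d} : Finset α).image f).card = (({b, c, d} : Finset α).image f).card := by
          rw [Finset.image_insert, hfab,
            Finset.insert_eq_of_mem (Finset.mem_image_of_mem f (Finset.mem_insert_self _ _))]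
      _ ≤ ({b, c, d} : Finset α).card := Finset.card_image_le
      _ ≤ 3 := Finset.card_le_three

end Equiv.Perm

theorem SimpleGraph.not_exists_completeBipartite_two_of_ncard_commonNeighbors_le
    {V : Type*} [Finite V] (G : SimpleGraph V) {m : ℕ}
    (h : ∀ u v, u ≠ v → (G.commonNeighbors u v).ncard ≤ m) :
    ¬ ∃ (a : Fin 2 → V) (b : Fin (m + 1) → V),
        Injective a ∧ Injective b ∧ ∀ i j, G.Adj (a i) (b j) := by
  rintro ⟨a, b, ha, hb, hadj⟩
  have hsub : Set.range b ⊆ G.commonNeighbors (a 0) (a 1) := by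
    rintro _ ⟨j, rfl⟩
    exact ⟨hadj 0 j, hadj 1 j⟩
  have hcard := (Set.ncard_le_ncard hsub (Set.toFinite _)).trans (h _ _ (ha.ne (by decide)))
  rw [Set.ncard_range_of_injective hb, Nat.card_fin] at hcard
  omega

section Cayley

variable {n : ℕ} {T : Set (Perm (Fin n))}

theorem exists_mem_eq_mul_of_cayley_adj (hT : ∀ t ∈ T, t⁻¹ ∈ T) {g h : Perm (Fin n)}
    (hgh : (cayley T).Adj g h) : ∃ t ∈ T, h = g * t := by
  obtain ⟨-, hgh | ⟨t, ht, rfl⟩⟩ := (SimpleGraph.fromRel_adj _ g h).1 hgh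
  · exact hgh
  · exact ⟨t⁻¹, hT t ht, (mul_inv_cancel_right h t).symm⟩

theorem ncard_commonNeighbors_cayley_le_three (hT : ∀ t ∈ T, t.IsSwap) {u v : Perm (Fin n)}
    (huv : u ≠ v) : ((cayley T).commonNeighbors u v).ncard ≤ 3 := by
  have hT_inv : ∀ t ∈ T, t⁻¹ ∈ T := fun t ht => by
    obtain ⟨x, y, -, rfl⟩ := hT t ht
    rwa [swap_inv]
  have hsub : (cayley T).commonNeighbors u v ⊆
      (u * ·) '' {t | t.IsSwap ∧ (v⁻¹ * u * t).IsSwap} := by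
    rintro w ⟨hu, hv⟩
    obtain ⟨t, ht, rfl⟩ := exists_mem_eq_mul_of_cayley_adj hT_inv hu
    obtain ⟨s, hs, hus⟩ := exists_mem_eq_mul_of_cayley_adj hT_inv hv
    refine ⟨t, ⟨hT t ht, ?_⟩, rfl⟩
    rw [mul_assoc, hus, inv_mul_cancel_left]
    exact hT s hs
  calc ((cayley T).commonNeighbors u v).ncard
      ≤ ((u * ·) '' {t | t.IsSwap ∧ (v⁻¹ * u * t).IsSwap}).ncard :=
        Set.ncard_le_ncard hsub (Set.toFinite _)
    _ = {t | t.IsSwap ∧ (v⁻¹ * u * t).IsSwap}.ncard :=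
        Set.ncard_image_of_injective _ (mul_right_injective u)
    _ ≤ 3 := Perm.ncard_setOf_isSwap_and_isSwap_mul_le_three
        fun h => huv (inv_mul_eq_one.1 h).symm

end Cayley

theorem stmt6_general (n : ℕ)
    (T : Set (Equiv.Perm (Fin n))) (hT : ∀ t ∈ T, Equiv.Perm.IsSwap t) :
    (∀ u v : Equiv.Perm (Fin n), u ≠ v →
      ((cayley T).neighborSet u ∩ (cayley T).neighborSet v).ncard ≤ 3) ∧
    ¬ ∃ (a : Fin 2 → Equiv.Perm (Fin n)) (b : Fin 4 → Equiv.Perm (Fin n)),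
        Function.Injective a ∧ Function.Injective b ∧
        ∀ (i : Fin 2) (j : Fin 4), (cayley T).Adj (a i) (b j) := by
  have hcommon : ∀ u v : Perm (Fin n), u ≠ v → ((cayley T).commonNeighbors u v).ncard ≤ 3 :=
    fun _ _ => ncard_commonNeighbors_cayley_le_three hT
  exact ⟨hcommon,
    (cayley T).not_exists_completeBipartite_two_of_ncard_commonNeighbors_le hcommon⟩

/-- For `n ≥ k+1 ≥ 3`, any two distinct vertices of `T_kG_n` have at most `3` common
neighbors; in particular `T_kG_n` contains no subgraph isomorphic to `K_{2,4}`. -/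
theorem stmt6 (n k : ℕ) (hk : 2 ≤ k) (hkn : k + 1 ≤ n)
    (T : Set (Equiv.Perm (Fin n))) (hT : ∀ t ∈ T, Equiv.Perm.IsSwap t)
    (hkt : IsKTree k (transGraph T)) :
    (∀ u v : Equiv.Perm (Fin n), u ≠ v →
      ((cayley T).neighborSet u ∩ (cayley T).neighborSet v).ncard ≤ 3) ∧
    ¬ ∃ (a : Fin 2 → Equiv.Perm (Fin n)) (b : Fin 4 → Equiv.Perm (Fin n)),
        Function.Injective a ∧ Function.Injective b ∧
        ∀ (i : Fin 2) (j : Fin 4), (cayley T).Adj (a i) (b j) :=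
  stmt6_general n T hT
end

section
/- Let u and v be distinct vertices of the Cayley graph Cay(Sym(n),𝒯) generated by a set of transpositions 𝒯. If u and v have exactly 3 common neighbors, then there exist three points s, p, t of {1,…,n} forming a triangle in G(𝒯) (i.e., the transpositions (s t), (s p), (p t) all lie in 𝒯) such that the three common neighbors are u·(s t) = v·(s p), u·(s p) = v·(p t), and u·(p t) = v·(s t). -/
theorem Set.ncard_triple_le {β : Type*} (x y z : β) : ({x, y, z} : Set β).ncard ≤ 3 :=
  (ncard_insert_le _ _).trans <| Nat.succ_le_succ <| (ncard_insert_le _ _).trans (by simp)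

namespace Equiv.Perm

variable {α : Type*} [DecidableEq α]

theorem IsSwap.eq_swap_apply {σ : Perm α} (h : σ.IsSwap) {x : α} (hx : σ x ≠ x) :
    σ = swap x (σ x) :=
  h.isCycle.eq_swap_of_apply_apply_eq_self hx <| by
    obtain ⟨a, b, -, rfl⟩ := h
    exact swap_apply_self a b x

theorem apply_ne_of_isSwap_mul_swap {z : Perm α} (hz : z ≠ 1) {x y : α} (hxy : x ≠ y)
    (h : (z * swap x y).IsSwap) : z x ≠ x := by
  intro hx
  have hy : (z * swap x y) y = x := by simp [hx]
  have := h.eq_swap_apply (hy.trans_ne hxy)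
  rw [hy, swap_comm] at this
  exact hz (by simpa using congrArg (· * swap x y) this)

theorem apply_eq_of_isSwap_mul_swap {z : Perm α} (hz : z ≠ 1) (hzz : z * z = 1) {x y : α}
    (hxy : x ≠ y) (h : (z * swap x y).IsSwap) : z x = y := by
  by_contra hzx
  have hzx' := apply_ne_of_isSwap_mul_swap hz hxy h
  have hσ := h.eq_swap_apply (x := y) (by simpa using hzx)
  have hzy : z y = x := by
    simpa [swap_apply_of_ne_of_ne hxy hzx'.symm] using congrArg (· x) hσ
  exact hzx (by simpa [hzy] using congrArg (· y) hzz)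

theorem swap_mul_swap_eq_triangle_or_disjoint {a b c d : α} (hab : a ≠ b) (hcd : c ≠ d)
    (h1 : swap c d * swap a b ≠ 1) :
    (∃ s p t, s ≠ p ∧ p ≠ t ∧ s ≠ t ∧ swap c d * swap a b = swap s p * swap s t) ∨
      (a ≠ c ∧ a ≠ d ∧ b ≠ c ∧ b ≠ d) := by
  by_cases hac : a = c
  · subst hac
    exact .inl ⟨a, d, b, hcd, fun hdb => h1 (by rw [hdb, swap_mul_self]), hab, rfl⟩
  by_cases had : a = d
  · subst had
    exact .inl ⟨a, c, b, hcd.symm, fun hcb => h1 (by rw [hcb, swap_comm, swap_mul_self]), hab,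
      by rw [swap_comm]⟩
  by_cases hbc : b = c
  · subst hbc
    exact .inl ⟨b, d, a, hcd, Ne.symm had, hab.symm, by rw [swap_comm a]⟩
  by_cases hbd : b = d
  · subst hbd
    exact .inl ⟨b, c, a, hcd.symm, Ne.symm hac, hab.symm, by rw [swap_comm c, swap_comm a]⟩
  exact .inr ⟨hac, had, hbc, hbd⟩

theorem eq_swap_or_of_isSwap_swap_mul_swap_mul_disjoint {a b c d : α} (hab : a ≠ b)
    (hac : a ≠ c) (had : a ≠ d) (hbc : b ≠ c) (hbd : b ≠ d) (hcd : c ≠ d) {τ : Perm α}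
    (hτ : τ.IsSwap) (h : (swap c d * swap a b * τ).IsSwap) :
    τ = swap a b ∨ τ = swap c d := by
  set z := swap c d * swap a b
  have hz : z ≠ 1 := fun h1 => by
    simpa [z, swap_apply_of_ne_of_ne hac had, swap_apply_of_ne_of_ne hbc hbd, hab.symm]
      using congrArg (· a) h1
  have hzz : z * z = 1 := by
    ext w
    simp only [z, Perm.mul_apply, swap_apply_def]
    split_ifs <;> simp_all
  obtain ⟨x, y, hxy, rfl⟩ := hτ
  have hx := apply_ne_of_isSwap_mul_swap hz hxy h
  obtain rfl := apply_eq_of_isSwap_mul_swap hz hzz hxy h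
  have : x = a ∨ x = b ∨ x = c ∨ x = d := by
    by_contra! hx'
    exact hx (by simp [z, swap_apply_of_ne_of_ne, hx'.1, hx'.2.1, hx'.2.2.1, hx'.2.2.2])
  rcases this with rfl | rfl | rfl | rfl <;>
    simp [z, swap_apply_of_ne_of_ne, swap_comm, *, Ne.symm]

theorem eq_swap_or_of_isSwap_swap_mul_swap_mul_triangle {s p t : α} (hsp : s ≠ p) (hpt : p ≠ t)
    (hst : s ≠ t) {τ : Perm α} (hτ : τ.IsSwap) (h : (swap s p * swap s t * τ).IsSwap) :
    τ = swap s t ∨ τ = swap s p ∨ τ = swap p t := by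
  set z := swap s p * swap s t
  have hz : z ≠ 1 := fun h1 => by
    simpa [z, swap_apply_of_ne_of_ne hst.symm hpt.symm, hst.symm] using congrArg (· s) h1
  have hmoved : ∀ w, z w ≠ w → w = s ∨ w = p ∨ w = t := by
    intro w hw
    by_contra! hw'
    exact hw (by simp [z, swap_apply_of_ne_of_ne, hw'.1, hw'.2.1, hw'.2.2])
  obtain ⟨x, y, hxy, rfl⟩ := hτ
  have hx := hmoved x (apply_ne_of_isSwap_mul_swap hz hxy h)
  have hy := hmoved y (apply_ne_of_isSwap_mul_swap hz hxy.symm (by rwa [swap_comm]))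
  rcases hx with rfl | rfl | rfl <;> rcases hy with rfl | rfl | rfl <;>
    simp_all [swap_comm]

theorem swap_mul_swap_mul_swap_triangle {s p t : α} (hsp : s ≠ p) (hpt : p ≠ t)
    (hst : s ≠ t) :
    swap s p * swap s t * swap s t = swap s p ∧
    swap s p * swap s t * swap s p = swap p t ∧
    swap s p * swap s t * swap p t = swap s t := by
  refine ⟨mul_swap_mul_self _ _ _, ?_, ?_⟩ <;>
    ext w <;> simp only [Perm.mul_apply, swap_apply_def] <;> split_ifs <;> simp_all

theorem exists_triangle_of_ncard_eq_three {z : Perm α} (hz : z ≠ 1) {S : Set (Perm α)}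
    (hS : ∀ τ ∈ S, τ.IsSwap ∧ (z * τ).IsSwap) (h3 : S.ncard = 3) :
    ∃ s p t, s ≠ p ∧ p ≠ t ∧ s ≠ t ∧ S = {swap s t, swap s p, swap p t} ∧
      z * swap s t = swap s p ∧ z * swap s p = swap p t ∧ z * swap p t = swap s t := by
  obtain ⟨τ, hτS⟩ := Set.nonempty_of_ncard_ne_zero (s := S) (by omega)
  obtain ⟨⟨a, b, hab, rfl⟩, c, d, hcd, hzab⟩ := hS τ hτS
  obtain rfl : z = swap c d * swap a b := by rw [← hzab, mul_swap_mul_self]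
  rcases swap_mul_swap_eq_triangle_or_disjoint hab hcd hz with
    ⟨s, p, t, hsp, hpt, hst, he⟩ | ⟨hac, had, hbc, hbd⟩
  · rw [he] at hS ⊢
    refine ⟨s, p, t, hsp, hpt, hst, ?_, swap_mul_swap_mul_swap_triangle hsp hpt hst⟩
    refine Set.eq_of_subset_of_ncard_le (fun σ hσ => ?_) (h3 ▸ Set.ncard_triple_le _ _ _)
      (Set.toFinite _)
    rcases eq_swap_or_of_isSwap_swap_mul_swap_mul_triangle hsp hpt hst (hS σ hσ).1 (hS σ hσ).2
      with rfl | rfl | rfl <;> simp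
  · have hsub : S ⊆ {swap a b, swap c d} := fun σ hσ =>
      eq_swap_or_of_isSwap_swap_mul_swap_mul_disjoint hab hac had hbc hbd hcd (hS σ hσ).1
        (hS σ hσ).2
    have := (Set.ncard_le_ncard hsub (Set.toFinite _)).trans (Set.ncard_insert_le _ _)
    rw [Set.ncard_singleton] at this
    omega

end Equiv.Perm

section Cayley

variable {n : ℕ} {T : Set (Equiv.Perm (Fin n))}

theorem cayley_adj (hT : ∀ t ∈ T, t.IsSwap) {g h : Equiv.Perm (Fin n)} :
    (cayley T).Adj g h ↔ ∃ t ∈ T, h = g * t := by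
  rw [cayley, SimpleGraph.fromRel_adj]
  constructor
  · rintro ⟨-, ht | ⟨t, htT, rfl⟩⟩
    · exact ht
    · obtain ⟨x, y, -, rfl⟩ := hT t htT
      exact ⟨_, htT, (Equiv.mul_swap_mul_self _ _ _).symm⟩
  · rintro ⟨t, htT, rfl⟩
    obtain ⟨x, y, hxy, rfl⟩ := hT t htT
    exact ⟨fun h => hxy (Equiv.mul_swap_eq_iff.mp h.symm), .inl ⟨_, htT, rfl⟩⟩

theorem cayley_neighborSet_inter (hT : ∀ t ∈ T, t.IsSwap) (u v : Equiv.Perm (Fin n)) :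
    (cayley T).neighborSet u ∩ (cayley T).neighborSet v =
      (u * ·) '' {t | t ∈ T ∧ v⁻¹ * u * t ∈ T} := by
  ext w
  simp only [Set.mem_inter_iff, SimpleGraph.mem_neighborSet, cayley_adj hT, Set.mem_image,
    Set.mem_ofPred_eq]
  constructor
  · rintro ⟨⟨t, htT, rfl⟩, t', ht'T, h⟩
    exact ⟨t, ⟨htT, by rwa [mul_assoc, h, inv_mul_cancel_left]⟩, rfl⟩
  · rintro ⟨t, ⟨htT, ht'⟩, rfl⟩
    exact ⟨⟨t, htT, rfl⟩, _, ht', by group⟩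

end Cayley

/-- If two distinct vertices `u, v` of `Cay(Sym(n), 𝒯)` have exactly `3` common
neighbors, then there is a triangle `s p t` in `G(𝒯)` such that the three common
neighbors are `u(st) = v(sp)`, `u(sp) = v(pt)` and `u(pt) = v(st)`. -/
theorem stmt7 (n : ℕ) (T : Set (Equiv.Perm (Fin n))) (hT : ∀ t ∈ T, Equiv.Perm.IsSwap t)
    (u v : Equiv.Perm (Fin n)) (huv : u ≠ v)
    (h3 : ((cayley T).neighborSet u ∩ (cayley T).neighborSet v).ncard = 3) :
    ∃ s p t : Fin n, s ≠ p ∧ p ≠ t ∧ s ≠ t ∧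
      Equiv.swap s t ∈ T ∧ Equiv.swap s p ∈ T ∧ Equiv.swap p t ∈ T ∧
      u * Equiv.swap s t = v * Equiv.swap s p ∧
      u * Equiv.swap s p = v * Equiv.swap p t ∧
      u * Equiv.swap p t = v * Equiv.swap s t ∧
      (cayley T).neighborSet u ∩ (cayley T).neighborSet v =
        {u * Equiv.swap s t, u * Equiv.swap s p, u * Equiv.swap p t} := by
  have hz : v⁻¹ * u ≠ 1 := fun h => huv (inv_mul_eq_one.mp h).symm
  rw [cayley_neighborSet_inter hT] at h3 ⊢
  rw [Set.ncard_image_of_injective _ (mul_right_injective u)] at h3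
  obtain ⟨s, p, t, hsp, hpt, hst, hS, e₁, e₂, e₃⟩ :=
    Equiv.Perm.exists_triangle_of_ncard_eq_three hz (fun τ hτ => ⟨hT τ hτ.1, hT _ hτ.2⟩) h3
  have hT₃ : ∀ τ ∈ ({Equiv.swap s t, Equiv.swap s p, Equiv.swap p t} : Set _), τ ∈ T :=
    fun τ hτ => (hS ▸ hτ).1
  refine ⟨s, p, t, hsp, hpt, hst, hT₃ _ (by simp), hT₃ _ (by simp), hT₃ _ (by simp),
    by rw [← e₁]; group, by rw [← e₂]; group, by rw [← e₃]; group, ?_⟩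
  rw [hS, Set.image_insert_eq, Set.image_insert_eq, Set.image_singleton]
end
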